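/- arXiv:1004.5587 — 2 statements merged into one kernel-verified Lean document; each statement's English description precedes it below -/
import Mathlib

section
/- Let x_0,...,x_{2n} be a lattice path excursion away from 0, with the equivalence relation i ≡ j iff x_i = x_j = min_{i ≤ k ≤ j} x_k (i ≤ j). If {i_1 < i_2 < ... < i_p} is an equivalence class with i_1 > 0, then x_{i_1 - 1} = x_{i_1} - 1, and x_{i_q - 1} = x_{i_q} + 1 for all 2 ≤ q ≤ p. -/
/-- The excursion equivalence: `i ≡ j` iff `x i = x j` and this common value is the
minimum of `x` over all indices between `i` and `j`. -/
def excursionRel (x : ℕ → ℤ) (i j : ℕ) : Prop :=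
  x i = x j ∧ ∀ k, min i j ≤ k → k ≤ max i j → x i ≤ x k

/-- if `S = {i₁ < i₂ < ⋯ < i_p}` is an equivalence class of the
excursion relation with `i₁ > 0`, then `x (i₁ - 1) = x i₁ - 1`, while
`x (i_q - 1) = x i_q + 1` for every non-minimal element `i_q` of the class. -/
theorem excursion_class_steps (n : ℕ) (x : ℕ → ℤ)
    (h0 : x 0 = 0) (h2n : x (2 * n) = 0)
    (hpos : ∀ i, 0 < i → i < 2 * n → 0 < x i)
    (hstep : ∀ i, 1 ≤ i → i ≤ 2 * n → |x i - x (i - 1)| = 1)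
    (S : Finset ℕ) (hSsub : ∀ i ∈ S, i ≤ 2 * n) (hSne : S.Nonempty)
    (hclass : ∀ j, j ≤ 2 * n → (j ∈ S ↔ excursionRel x (S.min' hSne) j))
    (hmin_pos : 0 < S.min' hSne) :
    x (S.min' hSne - 1) = x (S.min' hSne) - 1 ∧
      ∀ q ∈ S, q ≠ S.min' hSne → x (q - 1) = x q + 1 := by
  set m := S.min' hSne with hm
  have hmS : m ∈ S := S.min'_mem hSne
  have hm2n : m ≤ 2 * n := hSsub m hmS
  have hstep' : ∀ i, 1 ≤ i → i ≤ 2 * n →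
      x (i - 1) = x i + 1 ∨ x (i - 1) = x i - 1 := by
    intro i h1 h2
    have h := hstep i h1 h2
    rcases (abs_eq (by norm_num : (0:ℤ) ≤ 1)).mp h with h' | h' <;> omega
  have hnn : ∀ k, k ≤ 2 * n → 0 ≤ x k := by
    intro k hk
    rcases Nat.eq_zero_or_pos k with h | h
    · simp [h, h0]
    · rcases lt_or_eq_of_le hk with h' | h'
      · exact le_of_lt (hpos k h h')
      · simp [h', h2n]
  -- m < 2n
  have hmlt : m < 2 * n := by
    rcases lt_or_eq_of_le hm2n with h | h
    · exact h
    · exfalso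
      have h0S : 0 ∈ S := by
        rw [hclass 0 (Nat.zero_le _)]
        constructor
        · rw [h, h2n, h0]
        · intro k hk1 hk2
          rw [h, h2n]
          exact hnn k (by omega)
      have := S.min'_le 0 h0S
      omega
  have hxm_pos : 0 < x m := hpos m hmin_pos hmlt
  constructor
  · -- first part
    by_contra hne
    have hxm1 : x (m - 1) = x m + 1 := by
      rcases hstep' m hmin_pos hm2n with h | h
      · exact h
      · exact absurd h hne
    set P : ℕ → Prop := fun j => x j < x m with hP
    have : DecidablePred P := fun j => Int.decLt _ _
    set j := Nat.findGreatest P (m - 1) with hjdef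
    have hP0 : P 0 := by simp [hP, h0, hxm_pos]
    have hj : P j := Nat.findGreatest_spec (Nat.zero_le _) hP0
    have hjle : j ≤ m - 1 := Nat.findGreatest_le _
    have hjgr : ∀ k, j < k → k ≤ m - 1 → ¬ P k := by
      intro k h1 h2
      exact Nat.findGreatest_is_greatest h1 h2
    have hjne : j ≠ m - 1 := by
      intro hcontra
      rw [hcontra] at hj
      simp only [hP] at hj
      omega
    have hj1lt : j + 1 < m := by omega
    have hj1ge : x m ≤ x (j + 1) := by
      have := hjgr (j + 1) (by omega) (by omega)
      simpa [hP] using this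
    have hxj1 : x (j + 1) = x m := by
      have hs := hstep' (j + 1) (by omega) (by omega)
      simp only [Nat.add_sub_cancel] at hs
      simp only [hP] at hj
      omega
    have hj1S : j + 1 ∈ S := by
      rw [hclass (j + 1) (by omega)]
      constructor
      · exact hxj1.symm
      · intro k hk1 hk2
        rw [min_eq_right (by omega : j + 1 ≤ m)] at hk1
        rw [max_eq_left (by omega : j + 1 ≤ m)] at hk2
        rcases eq_or_lt_of_le hk2 with h | h
        · rw [h]
        · have := hjgr k (by omega) (by omega)
          simp only [hP, not_lt] at this
          exact this
    have := S.min'_le (j + 1) hj1S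
    omega
  · -- second part
    intro q hq hqne
    have hq2n : q ≤ 2 * n := hSsub q hq
    obtain ⟨heq, hminq⟩ := (hclass q hq2n).mp hq
    have hmq : m < q := lt_of_le_of_ne (S.min'_le q hq) (Ne.symm hqne)
    have h1 : x m ≤ x (q - 1) := by
      apply hminq (q - 1)
      · rw [min_eq_left (by omega : m ≤ q)]; omega
      · rw [max_eq_right (by omega : m ≤ q)]; omega
    rcases hstep' q (by omega) hq2n with h | h <;> omega
end

section
/- Let x_0,...,x_{2n} be a lattice path excursion away from 0, and define the graph on vertex set V = {0} ∪ {i : x_{i-1} = x_i - 1} with edges between i_1 < i_2 in V whenever x_{i_2} = x_{i_1} + 1 and x_k ≥ x_{i_1} for all i_1 ≤ k ≤ i_2. Then this graph has exactly |V| - 1 edges. -/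
/-- the graph on vertex set `V = {0} ∪ {i : x (i-1) = x i - 1}` with an
edge between `i₁ < i₂` in `V` whenever `x i₂ = x i₁ + 1` and `x k ≥ x i₁` for all
`i₁ ≤ k ≤ i₂`, has exactly `|V| - 1` edges. -/
theorem excursion_tree_edge_count (n : ℕ) (x : ℕ → ℤ)
    (h0 : x 0 = 0) (h2n : x (2 * n) = 0)
    (hpos : ∀ i, 0 < i → i < 2 * n → 0 < x i)
    (hstep : ∀ i, 1 ≤ i → i ≤ 2 * n → |x i - x (i - 1)| = 1)
    (V : Finset ℕ)
    (hV : V = insert 0 ((Finset.Icc 1 (2 * n)).filter (fun i => x (i - 1) = x i - 1)))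
    (E : Finset (ℕ × ℕ))
    (hE : E = (V ×ˢ V).filter (fun e => e.1 < e.2 ∧ x e.2 = x e.1 + 1 ∧
      ∀ k, e.1 ≤ k → k ≤ e.2 → x e.1 ≤ x k)) :
    E.card = V.card - 1 := by
  have hnonneg : ∀ k, k ≤ 2 * n → 0 ≤ x k := by
    intro k hk
    rcases Nat.eq_zero_or_pos k with h | h
    · simp [h, h0]
    rcases eq_or_lt_of_le hk with h' | h'
    · simp [h', h2n]
    exact le_of_lt (hpos k h h')
  have hVmem : ∀ i, i ∈ V ↔ i = 0 ∨ (1 ≤ i ∧ i ≤ 2 * n ∧ x (i - 1) = x i - 1) := by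
    intro i
    simp [hV, Finset.mem_insert, Finset.mem_filter, Finset.mem_Icc, and_assoc]
  have hEmem : ∀ a b : ℕ, (a, b) ∈ E ↔ a ∈ V ∧ b ∈ V ∧ a < b ∧ x b = x a + 1 ∧
      ∀ k, a ≤ k → k ≤ b → x a ≤ x k := by
    intro a b
    simp [hE, Finset.mem_filter, Finset.mem_product, and_assoc]
  have h0V : (0 : ℕ) ∈ V := by simp [hV]
  have uniq : ∀ a a' b : ℕ, (a, b) ∈ E → (a', b) ∈ E → a = a' := by
    intro a a' b h h'
    by_contra hne
    wlog hlt : a < a' generalizing a a'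
    · exact this a' a h' h (Ne.symm hne) (by omega)
    rw [hEmem] at h h'
    obtain ⟨_, _, hab, hx, hmin⟩ := h
    obtain ⟨ha'V, _, ha'b, hx', _⟩ := h'
    have hstepa' : x (a' - 1) = x a' - 1 := by
      rcases (hVmem a').mp ha'V with h1 | h1
      · omega
      · exact h1.2.2
    have h1 : x a ≤ x (a' - 1) := hmin (a' - 1) (by omega) (by omega)
    omega
  rw [← Finset.card_erase_of_mem h0V]
  apply Finset.card_bij (fun e _ => e.2)
  · rintro ⟨a, b⟩ he
    rw [hEmem] at he
    exact Finset.mem_erase.mpr ⟨by omega, he.2.1⟩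
  · rintro ⟨a, b⟩ ha ⟨a', b'⟩ ha' h
    simp only at h
    subst h
    have := uniq a a' b ha ha'
    simp [this]
  · intro b hb
    rw [Finset.mem_erase, hVmem] at hb
    obtain ⟨hb0, hb'⟩ := hb
    obtain ⟨hb1, hb2n, hbstep⟩ : 1 ≤ b ∧ b ≤ 2 * n ∧ x (b - 1) = x b - 1 := by
      rcases hb' with h | h
      · exact absurd h hb0
      · exact h
    have hbV : b ∈ V := by rw [hVmem]; right; exact ⟨hb1, hb2n, hbstep⟩
    have hxb1 : 0 ≤ x (b - 1) := hnonneg (b - 1) (by omega)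
    set m : ℤ := x b - 1 with hm
    have hm0 : 0 ≤ m := by omega
    set S := (Finset.range b).filter (fun i => x i < m) with hS
    rcases S.eq_empty_or_nonempty with hemp | hne
    · have hmle : ∀ k, k < b → m ≤ x k := by
        intro k hk
        by_contra hlt
        have hkS : k ∈ S := by
          simp only [hS, Finset.mem_filter, Finset.mem_range]
          exact ⟨hk, by omega⟩
        rw [hemp] at hkS
        simp at hkS
      have hmz : m = 0 := by
        have := hmle 0 (by omega)
        omega
      refine ⟨(0, b), ?_, rfl⟩
      rw [hEmem]
      refine ⟨h0V, hbV, by omega, by omega, ?_⟩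
      intro k hk hkb
      have := hnonneg k (by omega)
      omega
    · set j := S.max' hne with hj
      have hjS : j ∈ S := S.max'_mem hne
      have hjb : j < b := by
        have := (Finset.mem_filter.mp hjS).1
        simpa [Finset.mem_range] using this
      have hxj : x j < m := by
        have := (Finset.mem_filter.mp hjS).2
        simpa using this
      have hmax : ∀ k, j < k → k ≤ b → m ≤ x k := by
        intro k hk1 hk2
        rcases eq_or_lt_of_le hk2 with rfl | hlt
        · omega
        by_contra hlt'
        have hkS : k ∈ S := by
          simp only [hS, Finset.mem_filter, Finset.mem_range]
          exact ⟨hlt, by omega⟩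
        exact absurd (S.le_max' k hkS) (by omega)
      have hstepj : |x (j + 1) - x j| = 1 := by
        have := hstep (j + 1) (by omega) (by omega)
        simpa using this
      have habs := abs_le.mp hstepj.le
      have hkey : x (j + 1) = m ∧ x j = m - 1 := by
        have h1 : m ≤ x (j + 1) := hmax (j + 1) (by omega) (by omega)
        omega
      have hjV : (j + 1) ∈ V := by
        rw [hVmem]; right
        refine ⟨by omega, by omega, ?_⟩
        simp only [Nat.add_sub_cancel]
        omega
      have hjneb : j + 1 ≠ b := by
        intro h
        rw [h] at hkey
        omega
      refine ⟨(j + 1, b), ?_, rfl⟩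
      rw [hEmem]
      refine ⟨hjV, hbV, by omega, by omega, ?_⟩
      intro k hk hkb
      have := hmax k (by omega) hkb
      omega
end
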